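/- Let q₁ > 0, q₂ > 0 and μ ≥ 0 be real numbers, and set λ = q₂/q₁ and Υ = [[1, −2μ], [2λ, 1]]. Then Υ is invertible, and Υ⁻¹ · [[q₁, −q₂], [q₂, 0]] equals (1/(1 + 4λμ)) · [[q₁ + 2μq₂, −q₂], [−q₂, 2λq₂]]; in particular Υ⁻¹ · [[q₁, −q₂], [q₂, 0]] is a symmetric positive definite matrix. -/

import Mathlib

/-!
With `d = 1 + 4λμ = det Υ > 0`, the inverse is `Υ⁻¹ = d⁻¹ · adj Υ`, and the relation `λ q₁ = q₂`
is exactly what makes `adj Υ · [[q₁, -q₂], [q₂, 0]]` symmetric. The resulting symmetric matrix has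
positive `(1,1)` entry and determinant `q₂² d > 0`, so it is positive definite.
-/

open Matrix

namespace Matrix

variable {K : Type*} [Field K]

theorem inv_fin_two_of (a b c d : K) :
    (!![a, b; c, d])⁻¹ = (a * d - b * c)⁻¹ • !![d, -b; -c, a] := by
  rw [inv_def, det_fin_two_of, adjugate_fin_two_of, Ring.inverse_eq_inv']

variable [LinearOrder K] [IsStrictOrderedRing K] [StarRing K] [TrivialStar K]

theorem posDef_fin_two_of {a b c : K} (ha : 0 < a) (hdet : 0 < a * c - b ^ 2) :
    (!![a, b; b, c]).PosDef := by
  refine .of_dotProduct_mulVec_pos ?_ fun x hx => ?_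
  · ext i j
    fin_cases i <;> fin_cases j <;> simp
  · simp only [star_trivial, dotProduct, mulVec, Fin.sum_univ_two, of_apply, cons_val',
      cons_val_zero, cons_val_one, empty_val', cons_val_fin_one]
    have complete_square : a * (x 0 * (a * x 0 + b * x 1) + x 1 * (b * x 0 + c * x 1)) =
        (a * x 0 + b * x 1) ^ 2 + (a * c - b ^ 2) * x 1 ^ 2 := by ring
    refine pos_of_mul_pos_right (complete_square ▸ ?_) ha.le
    by_cases h1 : x 1 = 0
    · have h0 : x 0 ≠ 0 := fun h0 => hx (funext fun i => by fin_cases i <;> assumption)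
      simpa [h1] using sq_pos_of_ne_zero (mul_ne_zero ha.ne' h0)
    · positivity

end Matrix

/-- for `q₁, q₂ > 0`, `μ ≥ 0`, `λ = q₂/q₁` and `Υ = [[1, −2μ], [2λ, 1]]`,
the matrix `Υ` is invertible and `Υ⁻¹ · [[q₁, −q₂], [q₂, 0]]` equals
`(1/(1 + 4λμ)) · [[q₁ + 2μq₂, −q₂], [−q₂, 2λq₂]]`, a symmetric positive definite matrix. -/
theorem stmt_9 (q1 q2 μ lam : ℝ) (h1 : 0 < q1) (h2 : 0 < q2) (hμ : 0 ≤ μ)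
    (hlam : lam = q2 / q1) :
    let Υ : Matrix (Fin 2) (Fin 2) ℝ := !![1, -2 * μ; 2 * lam, 1]
    IsUnit Υ ∧
    Υ⁻¹ * !![q1, -q2; q2, 0] =
      (1 / (1 + 4 * lam * μ)) • !![q1 + 2 * μ * q2, -q2; -q2, 2 * lam * q2] ∧
    (Υ⁻¹ * !![q1, -q2; q2, 0]).PosDef := by
  intro Υ
  have hlam_pos : 0 < lam := hlam ▸ div_pos h2 h1
  have hd : 0 < 1 + 4 * lam * μ := by positivity
  have hq2 : q2 = lam * q1 := by rw [hlam, div_mul_cancel₀ _ h1.ne']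
  have hdet : Υ.det = 1 + 4 * lam * μ := by rw [det_fin_two_of]; ring
  have hsymm : Υ⁻¹ * !![q1, -q2; q2, 0] =
      (1 / (1 + 4 * lam * μ)) • !![q1 + 2 * μ * q2, -q2; -q2, 2 * lam * q2] := by
    subst hq2
    rw [inv_fin_two_of, smul_mul, mul_fin_two, one_div]
    congr 2 <;> ring_nf
  have hdet_symm :
      (q1 + 2 * μ * q2) * (2 * lam * q2) - (-q2) ^ 2 = q2 ^ 2 * (1 + 4 * lam * μ) := by
    linear_combination (-2 * q2) * hq2
  refine ⟨isUnit_iff_isUnit_det _ |>.2 (hdet ▸ hd.ne'.isUnit), hsymm, hsymm ▸ ?_⟩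
  exact (posDef_fin_two_of (by positivity) (hdet_symm ▸ by positivity)).smul (by positivity)
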